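/- Let 𝓗 be a hypergraph on a finite set H and let x, y, z ∈ H be distinct. Then y and z lie in the same connected component of 𝓗_{H∖{x}} if and only if y and z lie in the same connected component of (𝓗↾{x,y,z})_{{y,z}}, i.e., x ⇝ {y,z} holds in 𝓗 if and only if it holds in the reconnected restriction 𝓗↾{x,y,z}; equivalently, x disconnects y and z in 𝓗 if and only if x disconnects y and z in 𝓗↾{x,y,z}. -/

import Mathlib

open scoped Classical

noncomputable section

/-! ## Hypergraphs (nestohedra combinatorics), after Curien–Laplante-Anfossi:
hypergraphs, restrictions, connectivity, saturation, reconnected restriction,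
constructs/constructions, the face order, the flip rewriting, and terms over the
associated signatures. -/

/-- A hypergraph on a finite vertex set: a finite set of nonempty hyperedges whose union is
the vertex set, assumed atomic (every singleton is a hyperedge). -/
structure FHypergraph (α : Type*) [DecidableEq α] where
  verts : Finset α
  edges : Finset (Finset α)
  edges_nonempty : ∀ e ∈ edges, e.Nonempty
  edges_subset : ∀ e ∈ edges, e ⊆ verts
  atomic : ∀ v ∈ verts, {v} ∈ edges

namespace FHypergraph

variable {α : Type*} [DecidableEq α]

/-- The plain restriction `𝓗_X` of a hypergraph to a subset `X` of its vertices. -/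
def restrict (H : FHypergraph α) (X : Finset α) : FHypergraph α where
  verts := X ∩ H.verts
  edges := H.edges.filter (· ⊆ X)
  edges_nonempty e he := H.edges_nonempty e (Finset.mem_filter.mp he).1
  edges_subset e he :=
    Finset.subset_inter (Finset.mem_filter.mp he).2 (H.edges_subset e (Finset.mem_filter.mp he).1)
  atomic v hv := by
    rcases Finset.mem_inter.mp hv with ⟨h1, h2⟩
    exact Finset.mem_filter.mpr ⟨H.atomic v h2, Finset.singleton_subset_iff.mpr h1⟩

/-- A hypergraph is connected if its vertex set is nonempty and admits no nontrivial
partition `X₁ ∪ X₂` such that every edge lies in `X₁` or in `X₂`. -/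
def Connected (H : FHypergraph α) : Prop :=
  H.verts.Nonempty ∧ ∀ X₁ X₂ : Finset α, X₁.Nonempty → X₂.Nonempty →
    Disjoint X₁ X₂ → X₁ ∪ X₂ = H.verts → ∃ e ∈ H.edges, ¬e ⊆ X₁ ∧ ¬e ⊆ X₂

/-- `C` is (the vertex set of) a connected component of `H`: a maximal connected subset. -/
def IsComponent (H : FHypergraph α) (C : Finset α) : Prop :=
  C ⊆ H.verts ∧ (H.restrict C).Connected ∧
    ∀ D : Finset α, C ⊆ D → D ⊆ H.verts → (H.restrict D).Connected → D = C

/-- `y` and `z` lie in the same connected component of `H`. -/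
def SameComponent (H : FHypergraph α) (y z : α) : Prop :=
  ∃ C : Finset α, H.IsComponent C ∧ y ∈ C ∧ z ∈ C

/-- The saturation `Sat(𝓗)`: the set of (nonempty) connected subsets of vertices. -/
def sat (H : FHypergraph α) : Finset (Finset α) :=
  H.verts.powerset.filter fun X => (H.restrict X).Connected

theorem singleton_connected (H : FHypergraph α) {v : α} (hv : v ∈ H.verts) :
    (H.restrict {v}).Connected := by
  constructor
  · exact ⟨v, Finset.mem_inter.mpr ⟨Finset.mem_singleton_self v, hv⟩⟩
  · intro X₁ X₂ h₁ h₂ hd hu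
    exfalso
    have hv' : ({v} : Finset α) ∩ H.verts = {v} :=
      Finset.inter_eq_left.mpr (Finset.singleton_subset_iff.mpr hv)
    have hu' : X₁ ∪ X₂ = ({v} : Finset α) := hu.trans hv'
    have hX₁ : X₁ ⊆ {v} := hu' ▸ Finset.subset_union_left
    have hX₂ : X₂ ⊆ {v} := hu' ▸ Finset.subset_union_right
    obtain ⟨a, ha⟩ := h₁
    obtain ⟨b, hb⟩ := h₂
    have ha' := Finset.mem_singleton.mp (hX₁ ha)
    have hb' := Finset.mem_singleton.mp (hX₂ hb)
    subst ha'; exact Finset.disjoint_left.mp hd ha (hb' ▸ hb)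

/-- The reconnected restriction `𝓗 ↾ X` of `𝓗` to `X`. -/
def reconRestrict (H : FHypergraph α) (X : Finset α) : FHypergraph α where
  verts := X ∩ H.verts
  edges := (H.sat.image (· ∩ X)).filter (·.Nonempty)
  edges_nonempty e he := (Finset.mem_filter.mp he).2
  edges_subset := by
    intro e he
    rcases Finset.mem_image.mp (Finset.mem_filter.mp he).1 with ⟨Z, hZ, rfl⟩
    have hZv : Z ⊆ H.verts := Finset.mem_powerset.mp (Finset.mem_filter.mp hZ).1
    exact fun a ha => Finset.mem_inter.mpr
      ⟨(Finset.mem_inter.mp ha).2, hZv (Finset.mem_inter.mp ha).1⟩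
  atomic := by
    intro v hv
    rcases Finset.mem_inter.mp hv with ⟨h1, h2⟩
    refine Finset.mem_filter.mpr ⟨Finset.mem_image.mpr ⟨{v}, ?_, ?_⟩, ?_⟩
    · exact Finset.mem_filter.mpr
        ⟨Finset.mem_powerset.mpr (Finset.singleton_subset_iff.mpr h2),
         H.singleton_connected h2⟩
    · exact Finset.inter_eq_left.mpr (Finset.singleton_subset_iff.mpr h1)
    · exact ⟨v, by simp [Finset.inter_eq_left.mpr (Finset.singleton_subset_iff.mpr h1)]⟩

/-- `x ⇝ {y,z}` in `𝓗`: after removing `x`, the vertices `y` and `z` lie in the same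
connected component.  Its negation is "`x` disconnects `y` and `z` in `𝓗`". -/
def Links (H : FHypergraph α) (x y z : α) : Prop :=
  (H.restrict (H.verts \ {x})).SameComponent y z

/-- A hypergraph is contextual if for every connected subset `Y` of cardinality at least 3
and all distinct `x, y, z ∈ Y`, `x` disconnects `y` and `z` in `𝓗_Y` iff it does in `𝓗`. -/
def Contextual (H : FHypergraph α) : Prop :=
  ∀ Y : Finset α, Y ⊆ H.verts → (H.restrict Y).Connected → 3 ≤ Y.card →
    ∀ x y z : α, x ∈ Y → y ∈ Y → z ∈ Y → x ≠ y → y ≠ z → x ≠ z →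
      ((H.restrict Y).Links x y z ↔ H.Links x y z)

end FHypergraph

/-- Finite rooted trees with nodes decorated by finite sets (potential constructs). -/
inductive FTree (α : Type*) : Type _ where
  | node : Finset α → List (FTree α) → FTree α

namespace FTree

variable {α : Type*} [DecidableEq α]

/-- The decoration of the root node. -/
def label : FTree α → Finset α
  | node Y _ => Y

/-- The list of children of the root node. -/
def children : FTree α → List (FTree α)
  | node _ ts => ts

/-- The support of a tree: the union of the decorations of its nodes. -/
def support : FTree α → Finset α
  | node Y [] => Y
  | node Y (t :: ts) => support t ∪ support (node Y ts)

/-- The list of decorations of the nodes of a tree. -/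
def labels : FTree α → List (Finset α)
  | node Y [] => [Y]
  | node Y (t :: ts) => labels t ++ labels (node Y ts)

/-- The dimension of a construct: the sum over its nodes `X` of `|X| - 1`. -/
def dim (T : FTree α) : ℕ := (T.labels.map fun X => X.card - 1).sum

mutual
  /-- The (full) subtree rooted at the node decorated by `X`, if any. -/
  def subtreeAt : FTree α → Finset α → Option (FTree α)
    | node Y ts, X => if Y = X then some (node Y ts) else subtreeAtList ts X
  def subtreeAtList : List (FTree α) → Finset α → Option (FTree α)
    | [], _ => none
    | t :: ts, X => (subtreeAt t X).elim (subtreeAtList ts X) some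
end

/-- The support `supp (T ↾ X)` of the subtree rooted at the node decorated by `X`
(or `∅` if there is no such node). -/
def suppAt (T : FTree α) (X : Finset α) : Finset α :=
  ((T.subtreeAt X).map support).getD ∅

mutual
  /-- The list of supports of the subtrees rooted at the nodes of `T` (its nested set). -/
  def nests : FTree α → List (Finset α)
    | node Y ts => support (node Y ts) :: nestsList ts
  def nestsList : List (FTree α) → List (Finset α)
    | [] => []
    | t :: ts => nests t ++ nestsList ts
end

/-- The nested set of a tree, as a finite set. -/
def nestSet (T : FTree α) : Finset (Finset α) := T.nests.toFinset

/-- `S ≺ T` (`S` is covered by `T`) in the face order: `T` is obtained from `S` by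
contracting one edge between a node and its father (equivalently, the nested set of `T`
is obtained from that of `S` by removing one non-root element). -/
def CoveredBy (S T : FTree α) : Prop :=
  ∃ N ∈ S.nests, N ≠ S.support ∧ T.nestSet = S.nestSet.erase N

/-- The face (subface) order `S ≼ T` on constructs: the reflexive–transitive closure of
the covering relation `≺`. -/
def FaceLe (S T : FTree α) : Prop := Relation.ReflTransGen CoveredBy S T

/-- `IsSubtree S T`: `S` is a (full) subtree of `T`. -/
inductive IsSubtree : FTree α → FTree α → Prop
  | refl (t : FTree α) : IsSubtree t t
  | child {s t u : FTree α} : IsSubtree s t → t ∈ u.children → IsSubtree s u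

/-- In `T`, the node decorated by `X` has a child decorated by `Y`. -/
def ParentChild (X Y : Finset α) (T : FTree α) : Prop :=
  ∃ R : FTree α, IsSubtree R T ∧ R.label = X ∧ ∃ t ∈ R.children, t.label = Y

mutual
  /-- Pruning: remove all (subtrees rooted at) nodes whose decoration is not a subset
  of `X`, keeping the root. -/
  def prune (X : Finset α) : FTree α → FTree α
    | node Y ts => node Y (pruneList X ts)
  def pruneList (X : Finset α) : List (FTree α) → List (FTree α)
    | [] => []
    | t :: ts => if t.label ⊆ X then prune X t :: pruneList X ts else pruneList X ts
end

end FTree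

/-- `IsConstruct H T`: the tree `T` is a construct of the hypergraph `H`: its root `Y` is a
nonempty subset of the vertices, its children are constructs of the connected components of
`𝓗 ∖ Y` (one for each component, listed by increasing maximal vertex). -/
inductive IsConstruct {α : Type*} [LinearOrder α] : FHypergraph α → FTree α → Prop
  | node {H : FHypergraph α} (Y : Finset α) (ts : List (FTree α))
      (hY : Y.Nonempty) (hYsub : Y ⊆ H.verts)
      (hmem : ∀ t ∈ ts, (H.restrict (H.verts \ Y)).IsComponent t.support)
      (hcover : ∀ C : Finset α, (H.restrict (H.verts \ Y)).IsComponent C →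
        ∃ t ∈ ts, t.support = C)
      (hsorted : ts.Pairwise fun a b => a.support.max < b.support.max)
      (hchild : ∀ t ∈ ts, IsConstruct (H.restrict t.support) t) :
      IsConstruct H (FTree.node Y ts)

section ConstructionOrder

variable {α : Type*} [LinearOrder α]

/-- A construction: a construct all of whose nodes are singletons (a vertex of the
nestohedron). -/
def IsConstruction (H : FHypergraph α) (T : FTree α) : Prop :=
  IsConstruct H T ∧ ∀ X ∈ T.labels, X.card = 1

/-- An `X`-face: a 2-dimensional construct whose unique non-singleton node is decorated
by `X`, of cardinality 3. -/
def IsXFace (H : FHypergraph α) (X : Finset α) (T : FTree α) : Prop :=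
  IsConstruct H T ∧ X.card = 3 ∧ X ∈ T.labels ∧ ∀ Y ∈ T.labels, Y ≠ X → Y.card = 1

/-- Two distinct constructions are joined by an edge of the nestohedron: both are covered
by a common 1-dimensional construct. -/
def EdgeJoined (H : FHypergraph α) (S T : FTree α) : Prop :=
  IsConstruction H S ∧ IsConstruction H T ∧ S ≠ T ∧
  ∃ V : FTree α, IsConstruct H V ∧ V.dim = 1 ∧ FTree.CoveredBy S V ∧ FTree.CoveredBy T V

/-- The flip rewriting relation `S → T` on constructions of an ordered hypergraph:
`S` and `T` are the two endpoints of an edge whose 1-dimensional face has unique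
non-singleton node `{x, y}` with `x < y`, and in `S` the node `{x}` is the parent of the
node `{y}`. -/
def Flip (H : FHypergraph α) (S T : FTree α) : Prop :=
  IsConstruction H S ∧ IsConstruction H T ∧ S ≠ T ∧
  ∃ (V : FTree α) (x y : α), IsConstruct H V ∧ V.dim = 1 ∧ x ≠ y ∧
    ({x, y} : Finset α) ∈ V.labels ∧ FTree.CoveredBy S V ∧ FTree.CoveredBy T V ∧
    FTree.ParentChild ({x} : Finset α) ({y} : Finset α) S ∧ x < y

/-- The coordinate vector of a construction `S` of `H`:
`v^S_x = |{e ∈ Sat(𝓗) : x ∈ e ⊆ supp (S ↾ x)}|`. -/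
def coordVec (H : FHypergraph α) (S : FTree α) (x : α) : ℕ :=
  (H.sat.filter fun e => x ∈ e ∧ e ⊆ S.suppAt {x}).card

end ConstructionOrder

/-- Raw terms over the signature `Σ_𝓗` (and `Σ^c_𝓗`): variables are (connected) subsets,
function symbols are pairs `(X, Y)` of subsets, applied to a list of arguments. -/
inductive HTerm (α : Type*) : Type _ where
  | var : Finset α → HTerm α
  | app : Finset α → Finset α → List (HTerm α) → HTerm α

namespace HTerm

variable {α : Type*} [DecidableEq α]

/-- The (output) sort of a term. -/
def sortOf : HTerm α → Finset α
  | var A => A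
  | app _ Y _ => Y

/-- The list of variables occurring in a term. -/
def varsList : HTerm α → List (Finset α)
  | var A => [A]
  | app _ _ [] => []
  | app X Y (t :: ts) => varsList t ++ varsList (app X Y ts)

/-- The list of first components of the function symbols occurring in a term. -/
def appFirsts : HTerm α → List (Finset α)
  | var _ => []
  | app X _ [] => [X]
  | app X Y (t :: ts) => appFirsts t ++ appFirsts (app X Y ts)

/-- A term is closed if it contains no variables. -/
def Closed (t : HTerm α) : Prop := t.varsList = []

/-- The union `⋃ var(t)` of the variables of a term. -/
def varsUnion (t : HTerm α) : Finset α := t.varsList.foldr (· ∪ ·) ∅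

mutual
  /-- Projection of a term to a decorated tree: every function symbol `(X, Y)` is sent to
  its first component `X`, and all variables are pruned. -/
  def toTree : HTerm α → FTree α
    | .var A => .node A []
    | .app X _ ts => .node X (toTreeList ts)
  def toTreeList : List (HTerm α) → List (FTree α)
    | [] => []
    | .var _ :: ts => toTreeList ts
    | t :: ts => toTree t :: toTreeList ts
end

end HTerm

/-- Well-formed terms over the signature `Σ_𝓗` associated with the hypergraph `H`:
a variable is a connected subset (its own sort); a function symbol `(X, Y)` (with
`∅ ≠ X ⊆ Y ⊆ H` and `Y` connected) is applied to arguments whose sorts are exactly the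
connected components of `𝓗_Y ∖ X`, listed by increasing maximal vertex. -/
inductive IsTerm {α : Type*} [LinearOrder α] (H : FHypergraph α) : HTerm α → Prop
  | var (A : Finset α) : A ⊆ H.verts → (H.restrict A).Connected → IsTerm H (.var A)
  | app (X Y : Finset α) (ts : List (HTerm α)) :
      X.Nonempty → X ⊆ Y → Y ⊆ H.verts → (H.restrict Y).Connected →
      (∀ t ∈ ts, (H.restrict (Y \ X)).IsComponent t.sortOf) →
      (∀ C : Finset α, (H.restrict (Y \ X)).IsComponent C → ∃ t ∈ ts, t.sortOf = C) →
      ts.Pairwise (fun a b => a.sortOf.max < b.sortOf.max) →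
      (∀ t ∈ ts, IsTerm H t) →
      IsTerm H (.app X Y ts)


namespace FHypergraph

variable {α : Type*} [DecidableEq α]

lemma ext' {H₁ H₂ : FHypergraph α} (hv : H₁.verts = H₂.verts)
    (he : H₁.edges = H₂.edges) : H₁ = H₂ := by
  cases H₁; cases H₂; simp_all

lemma restrict_restrict (H : FHypergraph α) {X C : Finset α} (h : C ⊆ X) :
    (H.restrict X).restrict C = H.restrict C := by
  refine ext' ?_ ?_
  · show C ∩ (X ∩ H.verts) = C ∩ H.verts
    ext a; simp only [Finset.mem_inter]
    exact ⟨fun ⟨h1, _, h3⟩ => ⟨h1, h3⟩, fun ⟨h1, h2⟩ => ⟨h1, h h1, h2⟩⟩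
  · show (H.edges.filter (· ⊆ X)).filter (· ⊆ C) = H.edges.filter (· ⊆ C)
    ext e
    simp only [Finset.mem_filter, and_assoc]
    exact ⟨fun ⟨h1, _, h3⟩ => ⟨h1, h3⟩, fun ⟨h1, h2⟩ => ⟨h1, h2.trans h, h2⟩⟩

lemma exists_component (G : FHypergraph α) {Z : Finset α} (hZ : Z ⊆ G.verts)
    (hc : (G.restrict Z).Connected) : ∃ C, G.IsComponent C ∧ Z ⊆ C := by
  classical
  set s := G.verts.powerset.filter (fun X => Z ⊆ X ∧ (G.restrict X).Connected) with hs
  have hZs : Z ∈ s := by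
    simp only [hs, Finset.mem_filter, Finset.mem_powerset]
    exact ⟨hZ, le_refl _, hc⟩
  obtain ⟨C, hCs, hmax⟩ := s.exists_max_image (fun X => X.card) ⟨Z, hZs⟩
  simp only [hs, Finset.mem_filter, Finset.mem_powerset] at hCs
  refine ⟨C, ⟨hCs.1, hCs.2.2, fun D hCD hDv hDc => ?_⟩, hCs.2.1⟩
  have hDs : D ∈ s := by
    simp only [hs, Finset.mem_filter, Finset.mem_powerset]
    exact ⟨hDv, hCs.2.1.trans hCD, hDc⟩
  exact (Finset.eq_of_subset_of_card_le hCD (hmax D hDs)).symm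

lemma mem_sat {H : FHypergraph α} {Z : Finset α} :
    Z ∈ H.sat ↔ Z ⊆ H.verts ∧ (H.restrict Z).Connected := by
  simp [sat, Finset.mem_filter, Finset.mem_powerset]

end FHypergraph

/-- Lemma `xyz-reconnected`.  For distinct vertices `x, y, z` of a
hypergraph `𝓗`, `x ⇝ {y,z}` holds in `𝓗` iff it holds in the reconnected restriction
`𝓗 ↾ {x,y,z}`; equivalently `x` disconnects `y` and `z` in `𝓗` iff it does in
`𝓗 ↾ {x,y,z}`. -/
theorem stmt0 {α : Type*} [DecidableEq α] (H : FHypergraph α) (x y z : α)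
    (hx : x ∈ H.verts) (hy : y ∈ H.verts) (hz : z ∈ H.verts)
    (hxy : x ≠ y) (hyz : y ≠ z) (hxz : x ≠ z) :
    H.Links x y z ↔ (H.reconRestrict {x, y, z}).Links x y z := by
  classical
  set V := H.verts with hV
  set K := H.reconRestrict {x, y, z} with hK
  have hxyzV : ({x, y, z} : Finset α) ⊆ V := by
    intro a ha
    simp only [Finset.mem_insert, Finset.mem_singleton] at ha
    rcases ha with rfl | rfl | rfl <;> assumption
  have hKverts : K.verts = ({x, y, z} : Finset α) := Finset.inter_eq_left.mpr hxyzV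
  have hyzx : ({y, z} : Finset α) ⊆ K.verts \ {x} := by
    intro a ha
    simp only [Finset.mem_insert, Finset.mem_singleton] at ha
    rw [Finset.mem_sdiff, hKverts]
    rcases ha with rfl | rfl
    · exact ⟨by simp, by simp [Ne.symm hxy]⟩
    · exact ⟨by simp, by simp [Ne.symm hxz]⟩
  have hK'verts : (K.verts \ {x}) ∩ K.verts = ({y, z} : Finset α) := by
    rw [hKverts]
    ext a
    simp only [Finset.mem_inter, Finset.mem_sdiff, Finset.mem_insert, Finset.mem_singleton]
    constructor
    · rintro ⟨⟨rfl | h, hne⟩, -⟩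
      · exact absurd rfl hne
      · exact h
    · rintro (rfl | rfl)
      · exact ⟨⟨Or.inr (Or.inl rfl), Ne.symm hxy⟩, Or.inr (Or.inl rfl)⟩
      · exact ⟨⟨Or.inr (Or.inr rfl), Ne.symm hxz⟩, Or.inr (Or.inr rfl)⟩
  have hGverts : (V \ {x}) ∩ V = V \ {x} := Finset.inter_eq_left.mpr Finset.sdiff_subset
  constructor
  · rintro ⟨C, ⟨hCv, hCc, -⟩, hyC, hzC⟩
    have hCv' : C ⊆ V \ {x} := by
      intro a ha; exact (Finset.mem_inter.mp (hCv ha)).1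
    have hCx : x ∉ C := fun h => (Finset.mem_sdiff.mp (hCv' h)).2 (Finset.mem_singleton_self x)
    have hCV : C ⊆ V := fun a ha => (Finset.mem_sdiff.mp (hCv' ha)).1
    rw [H.restrict_restrict hCv'] at hCc
    have hCsat : C ∈ H.sat := FHypergraph.mem_sat.mpr ⟨hCV, hCc⟩
    have heq : C ∩ ({x, y, z} : Finset α) = {y, z} := by
      ext a
      simp only [Finset.mem_inter, Finset.mem_insert, Finset.mem_singleton]
      constructor
      · rintro ⟨haC, rfl | h⟩
        · exact absurd haC hCx
        · exact h
      · rintro (rfl | rfl)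
        · exact ⟨hyC, Or.inr (Or.inl rfl)⟩
        · exact ⟨hzC, Or.inr (Or.inr rfl)⟩
    have hedge : ({y, z} : Finset α) ∈ K.edges := by
      refine Finset.mem_filter.mpr ⟨Finset.mem_image.mpr ⟨C, hCsat, heq⟩, ⟨y, by simp⟩⟩
    refine ⟨{y, z}, ⟨?_, ?_, ?_⟩, by simp, by simp⟩
    · show ({y, z} : Finset α) ⊆ (K.verts \ {x}) ∩ K.verts
      rw [hK'verts]
    · rw [K.restrict_restrict hyzx]
      constructor
      · exact ⟨y, Finset.mem_inter.mpr ⟨by simp, hKverts ▸ (by simp)⟩⟩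
      · intro X₁ X₂ h₁ h₂ hd hu
        refine ⟨{y, z}, Finset.mem_filter.mpr ⟨hedge, subset_rfl⟩, ?_, ?_⟩
        · intro hsub
          obtain ⟨b, hb⟩ := h₂
          have hbv : b ∈ (K.restrict {y, z}).verts := hu ▸ Finset.mem_union_right _ hb
          have : b ∈ X₁ := hsub (Finset.mem_inter.mp (show b ∈ ({y, z} : Finset α) ∩ K.verts from hbv)).1
          exact Finset.disjoint_left.mp hd this hb
        · intro hsub
          obtain ⟨b, hb⟩ := h₁
          have hbv : b ∈ (K.restrict {y, z}).verts := hu ▸ Finset.mem_union_left _ hb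
          have : b ∈ X₂ := hsub (Finset.mem_inter.mp (show b ∈ ({y, z} : Finset α) ∩ K.verts from hbv)).1
          exact Finset.disjoint_left.mp hd hb this
    · intro D hyzD hDv _
      refine Finset.Subset.antisymm (fun a ha => ?_) hyzD
      have := hDv ha
      rw [show (K.restrict (K.verts \ {x})).verts = (K.verts \ {x}) ∩ K.verts from rfl,
        hK'verts] at this
      exact this
  · rintro ⟨C', ⟨hC'v, hC'c, -⟩, hyC', hzC'⟩
    have hC'sub : C' ⊆ ({y, z} : Finset α) := by
      intro a ha
      have := hC'v ha
      rw [show (K.restrict (K.verts \ {x})).verts = (K.verts \ {x}) ∩ K.verts from rfl,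
        hK'verts] at this
      exact this
    have hC'eq : C' = ({y, z} : Finset α) := by
      refine Finset.Subset.antisymm hC'sub ?_
      intro a ha
      simp only [Finset.mem_insert, Finset.mem_singleton] at ha
      rcases ha with rfl | rfl <;> assumption
    rw [hC'eq, K.restrict_restrict hyzx] at hC'c
    obtain ⟨e, he, hn1, hn2⟩ := hC'c.2 {y} {z} ⟨y, by simp⟩ ⟨z, by simp⟩
      (by simp [hyz, Ne.symm hyz]) (by
        show ({y} : Finset α) ∪ {z} = ({y, z} : Finset α) ∩ K.verts
        rw [hKverts]
        ext a
        simp only [Finset.mem_union, Finset.mem_singleton, Finset.mem_inter,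
          Finset.mem_insert]
        constructor
        · rintro (rfl | rfl)
          · exact ⟨Or.inl rfl, Or.inr (Or.inl rfl)⟩
          · exact ⟨Or.inr rfl, Or.inr (Or.inr rfl)⟩
        · rintro ⟨rfl | rfl, -⟩
          · exact Or.inl rfl
          · exact Or.inr rfl)
    obtain ⟨heK, hesub⟩ := Finset.mem_filter.mp he
    have hye : y ∈ e := by
      by_contra hne
      exact hn2 fun a ha => by
        have := hesub ha
        simp only [Finset.mem_insert, Finset.mem_singleton] at this
        rcases this with rfl | rfl
        · exact absurd ha hne
        · exact Finset.mem_singleton_self a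
    have hze : z ∈ e := by
      by_contra hne
      exact hn1 fun a ha => by
        have := hesub ha
        simp only [Finset.mem_insert, Finset.mem_singleton] at this
        rcases this with rfl | rfl
        · exact Finset.mem_singleton_self a
        · exact absurd ha hne
    obtain ⟨Z, hZsat, hZe⟩ := Finset.mem_image.mp (Finset.mem_filter.mp heK).1
    obtain ⟨hZV, hZc⟩ := FHypergraph.mem_sat.mp hZsat
    have hyZ : y ∈ Z := (Finset.mem_inter.mp (hZe ▸ hye)).1
    have hzZ : z ∈ Z := (Finset.mem_inter.mp (hZe ▸ hze)).1
    have hxZ : x ∉ Z := by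
      intro hxZ
      have : x ∈ e := hZe ▸ Finset.mem_inter.mpr ⟨hxZ, by simp⟩
      have := hesub this
      simp only [Finset.mem_insert, Finset.mem_singleton] at this
      rcases this with h | h
      · exact hxy h
      · exact hxz h
    have hZsub : Z ⊆ V \ {x} := fun a ha =>
      Finset.mem_sdiff.mpr ⟨hZV ha, fun h => hxZ ((Finset.mem_singleton.mp h) ▸ ha)⟩
    have hZG : Z ⊆ (H.restrict (V \ {x})).verts := by
      show Z ⊆ (V \ {x}) ∩ V
      rw [hGverts]; exact hZsub
    have hZGc : ((H.restrict (V \ {x})).restrict Z).Connected := by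
      rw [H.restrict_restrict hZsub]; exact hZc
    obtain ⟨C, hC, hZC⟩ := (H.restrict (V \ {x})).exists_component hZG hZGc
    exact ⟨C, hC, hZC hyZ, hZC hzZ⟩

end
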